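/- Let d = 9 and k = 6. The orbit of the row vector δ₄ = (0,0,0,1) ∈ (ℤ/3ℤ)⁴ under right multiplication by the subgroup H₃(9,6) of GL(4, ℤ/3ℤ) generated by the reductions modulo 3 of M₀(9,6) and M₁ is exactly the set {(0,0,a,1) : a ∈ ℤ/3ℤ} = {(0,0,0,1), (0,0,1,1), (0,0,2,1)}. -/

import Mathlib

/-! The three vectors `(0,0,a,1)` form a set that right multiplication by each of the two
generators maps into itself (`M₀` mod 3 sends `(0,0,a,1)` to `(0,0,a+2,1)`, and `M₁` fixes it).
Since `GL(4, 𝔽₃)` is finite, the whole group `H₃(9,6)` then preserves that set, so the orbit of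
`δ₄` lies in it; conversely `δ₄`, `δ₄ M₀²` and `δ₄ M₀` exhaust it. -/

/-- The monodromy matrix `M₀(d,k)` around `0` of the Picard–Fuchs equation of certain
mirror Calabi–Yau threefolds. -/
def M0 (d k : ℤ) : Matrix (Fin 4) (Fin 4) ℤ :=
  !![1, 1, 0, 0; 0, 1, 0, 0; d, d, 1, 0; 0, -k, -1, 1]

/-- The monodromy matrix `M₁` around `1`. -/
def M1 : Matrix (Fin 4) (Fin 4) ℤ :=
  !![1, 0, 0, 0; 0, 1, 0, 1; 0, 0, 1, 0; 0, 0, 0, 1]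

lemma M0_det (d k : ℤ) : (M0 d k).det = 1 := by
  simp [M0, Matrix.det_succ_row_zero, Fin.sum_univ_succ, Fin.succAbove]

lemma M1_det : M1.det = 1 := by
  simp [M1, Matrix.det_succ_row_zero, Fin.sum_univ_succ, Fin.succAbove]

/-- The reduction modulo `p` of `M₀(d,k)`, as an element of `GL (Fin 4) (ZMod p)`. -/
noncomputable def M0p (p : ℕ) (d k : ℤ) : GL (Fin 4) (ZMod p) :=
  Matrix.nonsingInvUnit ((M0 d k).map (Int.castRingHom (ZMod p)))
    (by rw [← RingHom.mapMatrix_apply, ← RingHom.map_det, M0_det]; simp)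

/-- The reduction modulo `p` of `M₁`, as an element of `GL (Fin 4) (ZMod p)`. -/
noncomputable def M1p (p : ℕ) : GL (Fin 4) (ZMod p) :=
  Matrix.nonsingInvUnit (M1.map (Int.castRingHom (ZMod p)))
    (by rw [← RingHom.mapMatrix_apply, ← RingHom.map_det, M1_det]; simp)

open Matrix Set

section
variable {n R : Type*} [Fintype n] [DecidableEq n] [CommRing R]

def vecMulStabilizer (T : Set (n → R)) : Submonoid (GL n R) where
  carrier := {g | MapsTo (· ᵥ* (g : Matrix n n R)) T T}
  one_mem' _ hv := by simpa using hv
  mul_mem' {g h} hg hh v hv := by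
    simpa only [Units.val_mul, ← vecMul_vecMul] using hh (hg hv)

theorem mapsTo_vecMul_of_mem_closure [Finite R] {S : Set (GL n R)} {T : Set (n → R)}
    (hS : ∀ g ∈ S, MapsTo (· ᵥ* (g : Matrix n n R)) T T) {g : GL n R}
    (hg : g ∈ Subgroup.closure S) : MapsTo (· ᵥ* (g : Matrix n n R)) T T := by
  rw [← Subgroup.mem_toSubmonoid, Subgroup.closure_toSubmonoid_of_finite] at hg
  exact (Submonoid.closure_le (S := vecMulStabilizer T)).mpr hS hg
end

lemma coe_M0p (p : ℕ) (d k : ℤ) :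
    (M0p p d k : Matrix (Fin 4) (Fin 4) (ZMod p)) = (M0 d k).map (Int.castRingHom (ZMod p)) := rfl

lemma coe_M1p (p : ℕ) :
    (M1p p : Matrix (Fin 4) (Fin 4) (ZMod p)) = M1.map (Int.castRingHom (ZMod p)) := rfl

lemma coe_M0p_three_nine_six : (M0p 3 9 6 : Matrix (Fin 4) (Fin 4) (ZMod 3)) =
    !![1, 1, 0, 0; 0, 1, 0, 0; 0, 0, 1, 0; 0, 0, 2, 1] := by
  rw [coe_M0p]; ext i j; fin_cases i <;> fin_cases j <;> simp [M0] <;> decide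

lemma coe_M1p_three : (M1p 3 : Matrix (Fin 4) (Fin 4) (ZMod 3)) =
    !![1, 0, 0, 0; 0, 1, 0, 1; 0, 0, 1, 0; 0, 0, 0, 1] := by
  rw [coe_M1p]; ext i j; fin_cases i <;> fin_cases j <;> simp [M1]

theorem orbit3_delta4_96 :
    {w : Fin 4 → ZMod 3 |
      ∃ g ∈ Subgroup.closure {M0p 3 9 6, M1p 3},
        w = Matrix.vecMul ![0,0,0,1] (g : Matrix (Fin 4) (Fin 4) (ZMod 3))} =
    {![0,0,0,1], ![0,0,1,1], ![0,0,2,1]} := by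
  set T : Set (Fin 4 → ZMod 3) := {![0,0,0,1], ![0,0,1,1], ![0,0,2,1]}
  have hM0 : MapsTo (· ᵥ* (M0p 3 9 6 : Matrix (Fin 4) (Fin 4) (ZMod 3))) T T := by
    rw [coe_M0p_three_nine_six]
    rintro v (rfl | rfl | rfl) <;> simp only [T, mem_insert_iff, mem_singleton_iff] <;> decide
  have hM1 : MapsTo (· ᵥ* (M1p 3 : Matrix (Fin 4) (Fin 4) (ZMod 3))) T T := by
    rw [coe_M1p_three]
    rintro v (rfl | rfl | rfl) <;> simp only [T, mem_insert_iff, mem_singleton_iff] <;> decide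
  have hM0_mem : M0p 3 9 6 ∈ Subgroup.closure {M0p 3 9 6, M1p 3} :=
    Subgroup.subset_closure (mem_insert _ _)
  refine Subset.antisymm ?_ ?_
  · rintro _ ⟨g, hg, rfl⟩
    refine mapsTo_vecMul_of_mem_closure ?_ hg (mem_insert _ _)
    rintro g (rfl | rfl)
    exacts [hM0, hM1]
  · rintro _ (rfl | rfl | rfl)
    · exact ⟨1, one_mem _, by simp⟩
    · refine ⟨M0p 3 9 6 ^ 2, pow_mem hM0_mem 2, ?_⟩
      rw [pow_two, Units.val_mul, coe_M0p_three_nine_six]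
      decide
    · exact ⟨M0p 3 9 6, hM0_mem, by rw [coe_M0p_three_nine_six]; decide⟩
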